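/- Nikiforov's lemma: Let A be an irreducible nonnegative symmetric n×n real matrix, let R be the diagonal matrix of its row sums R_{ii} = Σ_j A_{ij}, and let p > 1. Then the spectral radius satisfies ρ(R + (1/(p-1)) A) ≥ (p/(p-1)) ρ(A), with equality if and only if all row sums of A are equal. -/

import Mathlib

/-!
Let `x` be an eigenvector of `A` for `ρ(A)`: it exists because, for a nonnegative symmetric
matrix, `|v|` does at least as well as a top eigenvector `v` in the Rayleigh quotient. With
`c = 1/(p-1)`, so that `p/(p-1) = 1 + c`, and `B = R + c A`, the Laplacian identity `x⬝Rx = x⬝Ax + ½ ∑ᵢⱼ Aᵢⱼ (xᵢ - xⱼ)²` gives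
`ρ(B) |x|² ≥ x⬝Bx = (1 + c) ρ(A) |x|² + ½ ∑ᵢⱼ Aᵢⱼ (xᵢ - xⱼ)²`. In the equality case `x` is constant
across every positive entry of `A`, hence constant by irreducibility, and then `Ax = ρ(A) x`
says that every row sum equals `ρ(A)`. Conversely, if all row sums equal `s`, then `ρ(B)` is at
most the common row sum `(1 + c) s` of `B`, while `s ≤ ρ(A)` since the all-ones vector is an
eigenvector of `A`.
-/

open Matrix Finset

noncomputable def specRad {n : ℕ} (M : Matrix (Fin n) (Fin n) ℂ) : ℝ :=
  sSup {r : ℝ | ∃ μ : ℂ, r = ‖μ‖ ∧ ∃ v : Fin n → ℂ, v ≠ 0 ∧ M.mulVec v = μ • v}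

section RowSum

variable {K ι : Type*} [NormedField K] [Fintype ι] [DecidableEq ι]

lemma Matrix.hasEigenvalue_toLin'_of_mulVec_eq_smul {M : Matrix ι ι K} {μ : K} {v : ι → K}
    (hv : v ≠ 0) (hμ : M *ᵥ v = μ • v) : Module.End.HasEigenvalue (toLin' M) μ :=
  Module.End.hasEigenvalue_of_hasEigenvector
    ⟨Module.End.mem_eigenspace_iff.mpr (by rwa [toLin'_apply]), hv⟩

lemma Matrix.exists_norm_le_sum_norm_of_mulVec_eq_smul {M : Matrix ι ι K} {μ : K}
    {v : ι → K} (hv : v ≠ 0) (hμ : M *ᵥ v = μ • v) : ∃ k, ‖μ‖ ≤ ∑ j, ‖M k j‖ := by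
  obtain ⟨k, hk⟩ := eigenvalue_mem_ball (hasEigenvalue_toLin'_of_mulVec_eq_smul hv hμ)
  refine ⟨k, ?_⟩
  rw [Metric.mem_closedBall, dist_eq_norm] at hk
  rw [← add_sum_erase _ _ (mem_univ k)]
  calc ‖μ‖ ≤ ‖M k k‖ + ‖μ - M k k‖ := norm_le_norm_add_norm_sub' μ (M k k)
    _ ≤ _ := by gcongr

end RowSum

section SpectralRadius

variable {n : ℕ}

lemma norm_le_specRad {M : Matrix (Fin n) (Fin n) ℂ} {μ : ℂ} {v : Fin n → ℂ}
    (hv : v ≠ 0) (hμ : M *ᵥ v = μ • v) : ‖μ‖ ≤ specRad M := by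
  refine le_csSup ⟨∑ k, ∑ j, ‖M k j‖, ?_⟩ ⟨μ, rfl, v, hv, hμ⟩
  rintro _ ⟨μ', rfl, v', hv', hμ'⟩
  obtain ⟨k, hk⟩ := exists_norm_le_sum_norm_of_mulVec_eq_smul hv' hμ'
  exact hk.trans (single_le_sum (fun k _ ↦ sum_nonneg fun j _ ↦ norm_nonneg _) (mem_univ k))

lemma specRad_le_of_sum_norm_le {M : Matrix (Fin n) (Fin n) ℂ} {t : ℝ} (ht : 0 ≤ t)
    (hM : ∀ k, ∑ j, ‖M k j‖ ≤ t) : specRad M ≤ t := by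
  refine Real.sSup_le ?_ ht
  rintro _ ⟨μ, rfl, v, hv, hμ⟩
  obtain ⟨k, hk⟩ := exists_norm_le_sum_norm_of_mulVec_eq_smul hv hμ
  exact hk.trans (hM k)

lemma specRad_of_isEmpty [IsEmpty (Fin n)] (M : Matrix (Fin n) (Fin n) ℂ) : specRad M = 0 :=
  le_antisymm (specRad_le_of_sum_norm_le le_rfl isEmptyElim)
    (Real.sSup_nonneg (by rintro _ ⟨μ, rfl, -⟩; positivity))

lemma exists_norm_eq_specRad [Nonempty (Fin n)] (M : Matrix (Fin n) (Fin n) ℂ) :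
    ∃ μ : ℂ, ∃ v : Fin n → ℂ, v ≠ 0 ∧ M *ᵥ v = μ • v ∧ ‖μ‖ = specRad M := by
  set S := {r : ℝ | ∃ μ : ℂ, r = ‖μ‖ ∧ ∃ v : Fin n → ℂ, v ≠ 0 ∧ M *ᵥ v = μ • v}
  have hfin : S.Finite := by
    refine ((Module.End.finite_spectrum (toLin' M)).image (‖·‖)).subset ?_
    rintro _ ⟨μ, rfl, v, hv, hμ⟩
    exact ⟨μ, (hasEigenvalue_toLin'_of_mulVec_eq_smul hv hμ).mem_spectrum, rfl⟩
  have hne : S.Nonempty := by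
    obtain ⟨μ, hμ⟩ := Module.End.exists_eigenvalue (toLin' M)
    obtain ⟨v, hv⟩ := hμ.exists_hasEigenvector
    exact ⟨_, μ, rfl, v, hv.2, by simpa using Module.End.mem_eigenspace_iff.mp hv.1⟩
  obtain ⟨μ, hμ, v, hv, hMv⟩ := hne.csSup_mem hfin
  exact ⟨μ, v, hv, hMv, hμ.symm⟩

end SpectralRadius

section RealSymmetric

variable {ι : Type*} [Fintype ι]

lemma Matrix.re_map_ofReal_mulVec (M : Matrix ι ι ℝ) (w : ι → ℂ) (i : ι) :
    ((M.map Complex.ofReal *ᵥ w) i).re = (M *ᵥ fun j ↦ (w j).re) i := by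
  simp [mulVec, dotProduct, Complex.re_sum]

lemma Matrix.im_map_ofReal_mulVec (M : Matrix ι ι ℝ) (w : ι → ℂ) (i : ι) :
    ((M.map Complex.ofReal *ᵥ w) i).im = (M *ᵥ fun j ↦ (w j).im) i := by
  simp [mulVec, dotProduct, Complex.im_sum]

lemma Matrix.dotProduct_smul_one_sub_mulVec [DecidableEq ι] (r : ℝ) (M : Matrix ι ι ℝ)
    (x : ι → ℝ) : x ⬝ᵥ (r • (1 : Matrix ι ι ℝ) - M) *ᵥ x = r * (x ⬝ᵥ x) - x ⬝ᵥ M *ᵥ x := by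
  rw [sub_mulVec, smul_mulVec, one_mulVec, dotProduct_sub, dotProduct_smul, smul_eq_mul]

lemma Matrix.IsSymm.exists_real_eigenvector [DecidableEq ι] {M : Matrix ι ι ℝ} (hM : M.IsSymm)
    {μ : ℂ} {w : ι → ℂ} (hw : w ≠ 0) (hμ : M.map Complex.ofReal *ᵥ w = μ • w) :
    ∃ v : ι → ℝ, v ≠ 0 ∧ M *ᵥ v = μ.re • v ∧ ‖μ‖ = |μ.re| := by
  have hH : (M.map Complex.ofReal).IsHermitian :=
    (isHermitian_iff_isSymm.mpr hM).map _ fun _ ↦ by simp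
  have hspec : μ ∈ spectrum ℂ (M.map Complex.ofReal) := by
    rw [← spectrum_toLin']
    exact (hasEigenvalue_toLin'_of_mulVec_eq_smul hw hμ).mem_spectrum
  obtain ⟨t, -, rfl⟩ := hH.spectrum_eq_image_range ▸ hspec
  have hre : M *ᵥ (fun j ↦ (w j).re) = t • fun j ↦ (w j).re := by
    ext i; simpa [← re_map_ofReal_mulVec] using congrArg Complex.re (congrFun hμ i)
  have him : M *ᵥ (fun j ↦ (w j).im) = t • fun j ↦ (w j).im := by
    ext i; simpa [← im_map_ofReal_mulVec] using congrArg Complex.im (congrFun hμ i)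
  simp only [Complex.coe_algebraMap, Complex.ofReal_re, Complex.norm_real, Real.norm_eq_abs,
    and_true]
  by_cases h : (fun j ↦ (w j).re) = 0
  · exact ⟨_, fun h' ↦ hw (funext fun j ↦ Complex.ext (congrFun h j) (congrFun h' j)), him⟩
  · exact ⟨_, h, hre⟩

variable {n : ℕ} {M : Matrix (Fin n) (Fin n) ℝ}

lemma abs_le_specRad_map_ofReal {ν : ℝ} {v : Fin n → ℝ} (hv : v ≠ 0) (hν : M *ᵥ v = ν • v) :
    |ν| ≤ specRad (M.map Complex.ofReal) := by
  have hv' : Complex.ofReal ∘ v ≠ 0 := fun h ↦ hv (funext fun i ↦ by simpa using congrFun h i)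
  have hν' : M.map Complex.ofReal *ᵥ (Complex.ofReal ∘ v) = (ν : ℂ) • (Complex.ofReal ∘ v) := by
    ext i
    have := RingHom.map_mulVec Complex.ofRealHom M v i
    simp only [hν, Pi.smul_apply, smul_eq_mul, Complex.ofRealHom_eq_coe, map_mul] at this
    exact this.symm
  simpa using norm_le_specRad hv' hν'

lemma posSemidef_specRad_smul_one_sub (hM : M.IsSymm) :
    (specRad (M.map Complex.ofReal) • (1 : Matrix (Fin n) (Fin n) ℝ) - M).PosSemidef := by
  set ρ := specRad (M.map Complex.ofReal)
  have hH : (ρ • (1 : Matrix (Fin n) (Fin n) ℝ) - M).IsHermitian :=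
    isHermitian_iff_isSymm.mpr ((isSymm_one.smul ρ).sub hM)
  refine hH.posSemidef_iff_eigenvalues_nonneg.mpr fun i ↦ ?_
  set b := ⇑(hH.eigenvectorBasis i)
  have hb : b ≠ 0 := (WithLp.ofLp_eq_zero 2).ne.2 (hH.eigenvectorBasis.orthonormal.ne_zero i)
  have hMb : M *ᵥ b = (ρ - hH.eigenvalues i) • b := by
    have := hH.mulVec_eigenvectorBasis i
    rw [sub_mulVec, smul_mulVec, one_mulVec] at this
    rw [sub_smul, ← this]
    exact (sub_sub_cancel _ _).symm
  have := abs_le_specRad_map_ofReal hb hMb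
  show 0 ≤ hH.eigenvalues i
  linarith [le_abs_self (ρ - hH.eigenvalues i)]

lemma dotProduct_mulVec_le_specRad (hM : M.IsSymm) (x : Fin n → ℝ) :
    x ⬝ᵥ M *ᵥ x ≤ specRad (M.map Complex.ofReal) * (x ⬝ᵥ x) := by
  have := (posSemidef_specRad_smul_one_sub hM).dotProduct_mulVec_nonneg x
  rw [star_trivial, dotProduct_smul_one_sub_mulVec] at this
  linarith

lemma mulVec_eq_specRad_smul_of_dotProduct_eq (hM : M.IsSymm) {x : Fin n → ℝ}
    (hx : x ⬝ᵥ M *ᵥ x = specRad (M.map Complex.ofReal) * (x ⬝ᵥ x)) :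
    M *ᵥ x = specRad (M.map Complex.ofReal) • x := by
  have := ((posSemidef_specRad_smul_one_sub hM).dotProduct_mulVec_zero_iff x).mp
    (by rw [star_trivial, dotProduct_smul_one_sub_mulVec, hx, sub_self])
  rw [sub_mulVec, smul_mulVec, one_mulVec, sub_eq_zero] at this
  exact this.symm

end RealSymmetric

section Nonnegative

variable {ι : Type*} [Fintype ι] {A : Matrix ι ι ℝ}

lemma abs_dotProduct_mulVec_le (hA : ∀ i j, 0 ≤ A i j) (v : ι → ℝ) :
    |v ⬝ᵥ A *ᵥ v| ≤ |v| ⬝ᵥ A *ᵥ |v| := by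
  simp only [dotProduct, mulVec, mul_sum]
  refine (abs_sum_le_sum_abs _ _).trans (sum_le_sum fun i _ ↦ ?_)
  refine (abs_sum_le_sum_abs _ _).trans_eq (sum_congr rfl fun j _ ↦ ?_)
  simp [abs_mul, abs_of_nonneg (hA i j)]

lemma exists_mulVec_eq_specRad_smul {n : ℕ} [Nonempty (Fin n)] {M : Matrix (Fin n) (Fin n) ℝ}
    (hM : M.IsSymm) (hnn : ∀ i j, 0 ≤ M i j) :
    ∃ x : Fin n → ℝ, x ≠ 0 ∧ M *ᵥ x = specRad (M.map Complex.ofReal) • x := by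
  obtain ⟨μ, w, hw, hMw, hμ⟩ := exists_norm_eq_specRad (M.map Complex.ofReal)
  obtain ⟨v, hv, hMv, hμv⟩ := hM.exists_real_eigenvector hw hMw
  have hvv : |v| ⬝ᵥ |v| = v ⬝ᵥ v := sum_congr rfl fun i _ ↦ abs_mul_abs_self (v i)
  refine ⟨|v|, by simpa using hv, mulVec_eq_specRad_smul_of_dotProduct_eq hM ?_⟩
  refine le_antisymm (dotProduct_mulVec_le_specRad hM _) ?_
  calc specRad (M.map Complex.ofReal) * (|v| ⬝ᵥ |v|) = |v ⬝ᵥ M *ᵥ v| := by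
        rw [hMv, dotProduct_smul, smul_eq_mul, abs_mul, ← hμv, hμ, hvv,
          abs_of_nonneg (by simpa using dotProduct_star_self_nonneg v)]
    _ ≤ |v| ⬝ᵥ M *ᵥ |v| := abs_dotProduct_mulVec_le hnn v

lemma Matrix.IsSymm.dotProduct_diagonal_rowSum_mulVec [DecidableEq ι] (hA : A.IsSymm)
    (x : ι → ℝ) :
    x ⬝ᵥ diagonal (fun i ↦ ∑ j, A i j) *ᵥ x =
      x ⬝ᵥ A *ᵥ x + (∑ i, ∑ j, A i j * (x i - x j) ^ 2) / 2 := by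
  have hswap : ∑ i, ∑ j, A i j * x j ^ 2 = ∑ i, ∑ j, A i j * x i ^ 2 := by
    rw [sum_comm]
    exact sum_congr rfl fun i _ ↦ sum_congr rfl fun j _ ↦ by rw [hA.apply]
  have hexpand : ∑ i, ∑ j, A i j * (x i - x j) ^ 2 =
      ∑ i, ∑ j, A i j * x i ^ 2 + ∑ i, ∑ j, A i j * x j ^ 2 -
        2 * ∑ i, ∑ j, x i * (A i j * x j) := by
    simp only [mul_sum, ← sum_add_distrib, ← sum_sub_distrib]
    exact sum_congr rfl fun i _ ↦ sum_congr rfl fun j _ ↦ by ring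
  have hdiag : x ⬝ᵥ diagonal (fun i ↦ ∑ j, A i j) *ᵥ x = ∑ i, ∑ j, A i j * x i ^ 2 := by
    simp only [dotProduct, mulVec_diagonal, mul_sum, sum_mul]
    exact sum_congr rfl fun i _ ↦ sum_congr rfl fun j _ ↦ by ring
  have hquad : x ⬝ᵥ A *ᵥ x = ∑ i, ∑ j, x i * (A i j * x j) := by
    simp only [dotProduct, mulVec, mul_sum]
  rw [hdiag, hquad, hexpand, hswap]
  ring

lemma eq_of_sum_sum_mul_sub_sq_eq_zero (hA : ∀ i j, 0 ≤ A i j) {x : ι → ℝ}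
    (hx : ∑ i, ∑ j, A i j * (x i - x j) ^ 2 = 0) {i j : ι} (hij : 0 < A i j) : x i = x j := by
  have hrow := (Fintype.sum_eq_zero_iff_of_nonneg fun i ↦ sum_nonneg fun j _ ↦
    mul_nonneg (hA i j) (sq_nonneg (x i - x j))).mp hx
  have := congrFun ((Fintype.sum_eq_zero_iff_of_nonneg fun j ↦
    mul_nonneg (hA i j) (sq_nonneg (x i - x j))).mp (congrFun hrow i)) j
  simp only [Pi.zero_apply, mul_eq_zero, hij.ne', false_or, pow_eq_zero_iff two_ne_zero] at this
  exact sub_eq_zero.mp this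

lemma eq_of_pow_apply_pos [DecidableEq ι] {α : Type*} (hA : ∀ i j, 0 ≤ A i j) {x : ι → α}
    (hx : ∀ i j, 0 < A i j → x i = x j) (k : ℕ) {i j : ι} (hk : 0 < (A ^ k) i j) :
    x i = x j := by
  induction k generalizing j with
  | zero =>
    rcases eq_or_ne i j with rfl | hij
    · rfl
    · simp [one_apply_ne hij] at hk
  | succ k ih =>
    rw [pow_succ, mul_apply] at hk
    obtain ⟨l, -, hl⟩ := (sum_pos_iff_of_nonneg fun l _ ↦
      mul_nonneg (pow_apply_nonneg hA k i l) (hA l j)).mp hk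
    obtain ⟨hil, hlj⟩ := (pos_and_pos_or_neg_and_neg_of_mul_pos hl).resolve_right
      fun h ↦ h.1.not_ge (pow_apply_nonneg hA k i l)
    exact (ih hil).trans (hx l j hlj)

end Nonnegative

section RowSumPerturbation

variable {n : ℕ} {A : Matrix (Fin n) (Fin n) ℝ}

lemma le_specRad_diagonal_add_smul_mul_dotProduct (hA : A.IsSymm) (c : ℝ) {x : Fin n → ℝ}
    (hx : A *ᵥ x = specRad (A.map Complex.ofReal) • x) :
    (1 + c) * specRad (A.map Complex.ofReal) * (x ⬝ᵥ x) +
        (∑ i, ∑ j, A i j * (x i - x j) ^ 2) / 2 ≤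
      specRad ((diagonal (fun i ↦ ∑ j, A i j) + c • A).map Complex.ofReal) * (x ⬝ᵥ x) := by
  have hB : (diagonal (fun i ↦ ∑ j, A i j) + c • A).IsSymm :=
    (isSymm_diagonal _).add (hA.smul c)
  calc _ = x ⬝ᵥ (diagonal (fun i ↦ ∑ j, A i j) + c • A) *ᵥ x := by
        rw [add_mulVec, dotProduct_add, hA.dotProduct_diagonal_rowSum_mulVec, smul_mulVec, hx,
          smul_smul, dotProduct_smul, dotProduct_smul, smul_eq_mul, smul_eq_mul]
        ring
    _ ≤ _ := dotProduct_mulVec_le_specRad hB x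

lemma mul_specRad_le_specRad_diagonal_add_smul [Nonempty (Fin n)] (hA : A.IsSymm)
    (hnn : ∀ i j, 0 ≤ A i j) (c : ℝ) :
    (1 + c) * specRad (A.map Complex.ofReal) ≤
      specRad ((diagonal (fun i ↦ ∑ j, A i j) + c • A).map Complex.ofReal) := by
  obtain ⟨x, hx, hAx⟩ := exists_mulVec_eq_specRad_smul hA hnn
  have hle := le_specRad_diagonal_add_smul_mul_dotProduct hA c hAx
  have hG : 0 ≤ ∑ i, ∑ j, A i j * (x i - x j) ^ 2 :=
    sum_nonneg fun i _ ↦ sum_nonneg fun j _ ↦ mul_nonneg (hnn i j) (sq_nonneg _)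
  have hxx : 0 < x ⬝ᵥ x := (by simpa using dotProduct_star_self_nonneg x : 0 ≤ x ⬝ᵥ x).lt_of_ne'
    (dotProduct_self_eq_zero.not.mpr hx)
  exact le_of_mul_le_mul_right (by linarith) hxx

lemma rowSum_eq_specRad_of_specRad_diagonal_add_smul_eq [Nonempty (Fin n)] (hA : A.IsSymm)
    (hnn : ∀ i j, 0 ≤ A i j) (hirr : ∀ i j, ∃ k : ℕ, 0 < (A ^ k) i j) {c : ℝ}
    (heq : specRad ((diagonal (fun i ↦ ∑ j, A i j) + c • A).map Complex.ofReal) =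
      (1 + c) * specRad (A.map Complex.ofReal)) (i : Fin n) :
    ∑ j, A i j = specRad (A.map Complex.ofReal) := by
  obtain ⟨x, hx, hAx⟩ := exists_mulVec_eq_specRad_smul hA hnn
  have hle := le_specRad_diagonal_add_smul_mul_dotProduct hA c hAx
  have hG : ∑ i, ∑ j, A i j * (x i - x j) ^ 2 = 0 := by
    refine le_antisymm ?_ (sum_nonneg fun i _ ↦ sum_nonneg fun j _ ↦
      mul_nonneg (hnn i j) (sq_nonneg _))
    rw [heq] at hle
    linarith
  obtain ⟨j, hj⟩ := Function.ne_iff.mp hx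
  have hconst : x = fun _ ↦ x j := funext fun l ↦ by
    obtain ⟨k, hk⟩ := hirr l j
    exact eq_of_pow_apply_pos hnn (fun _ _ ↦ eq_of_sum_sum_mul_sub_sq_eq_zero hnn hG) k hk
  have := congrFun hAx i
  rw [hconst] at this
  simp only [mulVec, dotProduct, ← sum_mul, Pi.smul_apply, smul_eq_mul] at this
  exact mul_right_cancel₀ hj this

lemma specRad_diagonal_add_smul_le_of_rowSum_eq [Nonempty (Fin n)] (hnn : ∀ i j, 0 ≤ A i j)
    {c : ℝ} (hc : 0 ≤ c) {s : ℝ} (hrow : ∀ i, ∑ j, A i j = s) :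
    specRad ((diagonal (fun i ↦ ∑ j, A i j) + c • A).map Complex.ofReal) ≤
      (1 + c) * specRad (A.map Complex.ofReal) := by
  have hs : 0 ≤ s := hrow (Classical.arbitrary _) ▸ sum_nonneg fun j _ ↦ hnn _ j
  have hAone : A *ᵥ 1 = s • 1 := by
    ext i
    simp [mulVec, dotProduct, hrow i]
  have hsρ : s ≤ specRad (A.map Complex.ofReal) := by
    simpa [abs_of_nonneg hs] using abs_le_specRad_map_ofReal one_ne_zero hAone
  have hBnn : ∀ k j, 0 ≤ (diagonal (fun i ↦ ∑ j, A i j) + c • A) k j := fun k j ↦ by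
    rw [Matrix.add_apply, Matrix.smul_apply, smul_eq_mul, diagonal_apply, hrow k]
    exact add_nonneg (by split_ifs <;> simp [hs]) (mul_nonneg hc (hnn k j))
  calc _ ≤ (1 + c) * s := by
        refine specRad_le_of_sum_norm_le (by positivity) fun k ↦ le_of_eq ?_
        simp only [map_apply, Complex.norm_real, Real.norm_eq_abs, abs_of_nonneg (hBnn k _)]
        simp [sum_add_distrib, diagonal_apply, ← mul_sum, hrow]
        ring
    _ ≤ _ := by gcongr

end RowSumPerturbation

/-- Nikiforov's lemma: for an irreducible nonnegative symmetric `A`, `R` the diagonal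
matrix of its row sums, and `p > 1`,
`ρ(R + (1/(p-1)) A) ≥ (p/(p-1)) ρ(A)`, with equality iff all row sums of `A` are equal. -/
theorem stmt6 {n : ℕ} (A : Matrix (Fin n) (Fin n) ℝ)
    (hsym : A.IsSymm) (hnn : ∀ i j, 0 ≤ A i j)
    (hirr : ∀ i j, ∃ k : ℕ, 0 < (A ^ k) i j)
    (p : ℝ) (hp : 1 < p) :
    (p / (p - 1)) * specRad (A.map Complex.ofReal) ≤
        specRad (((Matrix.diagonal fun i => ∑ j, A i j) + (1 / (p - 1)) • A).map
          Complex.ofReal) ∧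
    (specRad (((Matrix.diagonal fun i => ∑ j, A i j) + (1 / (p - 1)) • A).map
          Complex.ofReal) = (p / (p - 1)) * specRad (A.map Complex.ofReal) ↔
      ∀ i j, (∑ k, A i k) = ∑ k, A j k) := by
  rcases isEmpty_or_nonempty (Fin n) with hn | hn
  · simp [specRad_of_isEmpty]
  have hc : 0 ≤ 1 / (p - 1) := one_div_nonneg.mpr (sub_pos.mpr hp).le
  have hpc : p / (p - 1) = 1 + 1 / (p - 1) := by
    field_simp [(sub_pos.mpr hp).ne']
    ring
  have hle := mul_specRad_le_specRad_diagonal_add_smul hsym hnn (1 / (p - 1))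
  rw [hpc]
  refine ⟨hle, fun heq i j ↦ ?_, fun hrow ↦ le_antisymm ?_ hle⟩
  · rw [rowSum_eq_specRad_of_specRad_diagonal_add_smul_eq hsym hnn hirr heq i,
      rowSum_eq_specRad_of_specRad_diagonal_add_smul_eq hsym hnn hirr heq j]
  · exact specRad_diagonal_add_smul_le_of_rowSum_eq hnn hc fun i ↦ hrow i (Classical.arbitrary _)
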